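/- Let E and K be finite types. Let d i k : ℝ → ℝ be linear demand functions d i k (x) = (v i k / L i) · x with v i k > 0, L i > 0, let s i : ℝ → ℝ be supply functions with s i (y) ≥ 0 for all y, let w i k > 0 be weights, let R : Fin N → E → E → K → ℝ be nonnegative turning ratios, let λ : Fin N → E → K → ℝ be nonnegative exogenous inflows, let α : Fin N → E → K → ℝ be controls with 0 ≤ α t i k ≤ 1, let h > 0 satisfy h ≤ L i / v i k for all i, k, and let x⁰ : E → K → ℝ be nonnegative. Define the controlled FIFO trajectory recursively by: x 0 = x⁰; γ t i = sSup { γ ∈ [0,1] : ∀ j ∈ E, (∃ k, R t i j k > 0) → γ · Σ_{k ∈ K} Σ_{h' ∈ E} R t h' j k · α t h' k · d h' k (x t h' k) ≤ s j (Σ_{k ∈ K} w j k · x t j k) }; z t i k = γ t i · α t i k · d i k (x t i k); f t i j k = R t i j k · z t i k; and x (t+1) i k = x t i k + h·(λ t i k + Σ_{j ∈ E} f t j i k − z t i k). Then for every t, i, j, k: x t i k ≥ 0; 0 ≤ z t i k ≤ d i k (x t i k); f t i j k ≥ 0; f t i j k = R t i j k · z t i k; and Σ_{k ∈ K} Σ_{j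 ∈ E} f t j i k ≤ s i (Σ_{k ∈ K} w i k · x t i k). In other words, every trajectory of the controlled discrete-time multi-commodity дynamics is a feasible point of the discrete-time relaxed MC-FNC problem. -/

import Mathlib

/-!
The FIFO coefficient `γ t i` is a supremum of a closed set, hence itself admissible: it scales
cell `i`'s controlled demand so that every downstream cell `j` it feeds receives at most its
supply. The total inflow into a cell `j` is a combination of its upstream demands weighted by
the coefficients `γ t i`, and every upstream cell with positive flow into `j` has admissible
`γ t i`, so a weighted-average argument bounds the inflow by the supply. Since
`0 ≤ γ, α ≤ 1`, the outflow `z` is at most the demand `(v/L) x`, and the CFL condition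
`h ≤ L/v` then keeps the state nonnegative from one step to the next.
-/

open Finset

def admissibleScalings {ι : Type*} (P : ι → Prop) (c b : ι → ℝ) : Set ℝ :=
  {g | 0 ≤ g ∧ g ≤ 1 ∧ ∀ j, P j → g * c j ≤ b j}

lemma isClosed_admissibleScalings {ι : Type*} (P : ι → Prop) (c b : ι → ℝ) :
    IsClosed (admissibleScalings P c b) := by
  simp only [admissibleScalings, Set.ofPred_and, Set.ofPred_forall]
  exact (isClosed_le continuous_const continuous_id).inter
    ((isClosed_le continuous_id continuous_const).inter
      (isClosed_iInter fun j => isClosed_iInter fun _ =>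
        isClosed_le (continuous_id.mul continuous_const) continuous_const))

lemma sSup_admissibleScalings_mem {ι : Type*} (P : ι → Prop) (c b : ι → ℝ)
    (hb : ∀ j, P j → 0 ≤ b j) :
    sSup (admissibleScalings P c b) ∈ admissibleScalings P c b := by
  have hzero : (0 : ℝ) ∈ admissibleScalings P c b :=
    ⟨le_rfl, zero_le_one, fun j hj => by simpa using hb j hj⟩
  exact (isClosed_admissibleScalings P c b).csSup_mem ⟨0, hzero⟩ ⟨1, fun _ hg => hg.2.1⟩

lemma sum_mul_le_of_mul_sum_le {ι : Type*} (s : Finset ι) (γ a : ι → ℝ) {B : ℝ}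
    (ha : ∀ j ∈ s, 0 ≤ a j) (hB : 0 ≤ B)
    (hγ : ∀ j ∈ s, 0 < a j → γ j * ∑ i ∈ s, a i ≤ B) :
    ∑ j ∈ s, γ j * a j ≤ B := by
  rcases (sum_nonneg ha).eq_or_lt with hA | hA
  · have hzero : ∀ j ∈ s, a j = 0 := (sum_eq_zero_iff_of_nonneg ha).mp hA.symm
    rw [sum_eq_zero fun j hj => by rw [hzero j hj, mul_zero]]
    exact hB
  · refine le_of_mul_le_mul_right ?_ hA
    calc (∑ j ∈ s, γ j * a j) * ∑ i ∈ s, a i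
        = ∑ j ∈ s, a j * (γ j * ∑ i ∈ s, a i) := by
          rw [sum_mul]; exact sum_congr rfl fun _ _ => by ring
      _ ≤ ∑ j ∈ s, a j * B := sum_le_sum fun j hj => by
          rcases (ha j hj).eq_or_lt with h0 | hpos
          · rw [← h0, zero_mul, zero_mul]
          · exact mul_le_mul_of_nonneg_left (hγ j hj hpos) hpos.le
      _ = B * ∑ i ∈ s, a i := by rw [← sum_mul, mul_comm]

lemma sum_fifo_inflow_le {E K : Type*} [Fintype E] [Fintype K]
    (R : E → E → K → ℝ) (D : E → K → ℝ) (γ B : E → ℝ)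
    (hR : ∀ i j k, 0 ≤ R i j k) (hD : ∀ i k, 0 ≤ D i k) (hB : ∀ i, 0 ≤ B i)
    (hγ : ∀ i, γ i ∈ admissibleScalings (fun j => ∃ k, 0 < R i j k)
      (fun j => ∑ k, ∑ i', R i' j k * D i' k) B) (i : E) :
    ∑ k, ∑ j, R j i k * (γ j * D j k) ≤ B i := by
  set a : E → ℝ := fun j => ∑ k, R j i k * D j k
  have hflow : ∑ k, ∑ j, R j i k * (γ j * D j k) = ∑ j, γ j * a j := by
    rw [sum_comm]
    exact sum_congr rfl fun j _ => by rw [mul_sum]; exact sum_congr rfl fun k _ => by ring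
  rw [hflow]
  have ha : ∀ j ∈ univ, 0 ≤ a j := fun j _ => sum_nonneg fun k _ => mul_nonneg (hR ..) (hD ..)
  refine sum_mul_le_of_mul_sum_le _ γ a ha (hB i) fun j _ hpos => ?_
  have hRpos : ∃ k, 0 < R j i k := by
    by_contra! hR0
    exact hpos.ne' (sum_eq_zero fun k _ => by rw [le_antisymm (hR0 k) (hR j i k), zero_mul])
  convert (hγ j).2.2 i hRpos using 2
  exact sum_comm

lemma add_mul_sub_nonneg_of_cfl {x h q z r : ℝ} (hx : 0 ≤ x) (hh : 0 ≤ h) (hq : 0 ≤ q)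
    (hz : z ≤ r * x) (hcfl : h * r ≤ 1) : 0 ≤ x + h * (q - z) := by
  nlinarith [mul_le_mul_of_nonneg_left hz hh, mul_le_mul_of_nonneg_right hcfl hx]

theorem controlled_fifo_feasible_general
    (E K : Type*) [Fintype E] [Fintype K] (N : ℕ)
    (v : E → K → ℝ) (hv : ∀ i k, 0 < v i k)
    (L : E → ℝ) (hL : ∀ i, 0 < L i)
    (s : E → ℝ → ℝ) (hs : ∀ i y, 0 ≤ s i y)
    (w : E → K → ℝ)
    (R : Fin N → E → E → K → ℝ) (hR : ∀ t i j k, 0 ≤ R t i j k)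
    (lam : Fin N → E → K → ℝ) (hlam : ∀ t i k, 0 ≤ lam t i k)
    (α : Fin N → E → K → ℝ) (hα : ∀ t i k, 0 ≤ α t i k ∧ α t i k ≤ 1)
    (h : ℝ) (hh : 0 < h) (hCFL : ∀ i k, h ≤ L i / v i k)
    (x0 : E → K → ℝ) (hx0 : ∀ i k, 0 ≤ x0 i k)
    (x : Fin (N + 1) → E → K → ℝ) (z : Fin N → E → K → ℝ)
    (f : Fin N → E → E → K → ℝ) (γ : Fin N → E → ℝ)
    (hinit : x 0 = x0)
    (hγ : ∀ (t : Fin N) i, γ t i =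
      sSup {g : ℝ | 0 ≤ g ∧ g ≤ 1 ∧ ∀ j, (∃ k, 0 < R t i j k) →
        g * (∑ k, ∑ h', R t h' j k * (α t h' k * ((v h' k / L h') * x t.castSucc h' k)))
          ≤ s j (∑ k, w j k * x t.castSucc j k)})
    (hz : ∀ (t : Fin N) i k,
      z t i k = γ t i * (α t i k * ((v i k / L i) * x t.castSucc i k)))
    (hf : ∀ (t : Fin N) i j k, f t i j k = R t i j k * z t i k)
    (hupd : ∀ (t : Fin N) i k, x t.succ i k = x t.castSucc i k +
      h * (lam t i k + (∑ j, f t j i k) - z t i k)) :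
    (∀ t i k, 0 ≤ x t i k) ∧
    (∀ (t : Fin N) i k,
      0 ≤ z t i k ∧ z t i k ≤ (v i k / L i) * x t.castSucc i k) ∧
    (∀ (t : Fin N) i j k, 0 ≤ f t i j k) ∧
    (∀ (t : Fin N) i j k, f t i j k = R t i j k * z t i k) ∧
    (∀ (t : Fin N) i,
      (∑ k, ∑ j, f t j i k) ≤ s i (∑ k, w i k * x t.castSucc i k)) := by
  have hγmem : ∀ t i, γ t i ∈ admissibleScalings _ _ _ := fun t i => by
    rw [hγ t i]; exact sSup_admissibleScalings_mem _ _ _ fun j _ => hs j _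
  have hrate : ∀ i k, 0 ≤ v i k / L i := fun i k => div_nonneg (hv i k).le (hL i).le
  have hdemand : ∀ t, (∀ i k, 0 ≤ x t.castSucc i k) →
      ∀ i k, 0 ≤ α t i k * ((v i k / L i) * x t.castSucc i k) := fun t hx i k =>
    mul_nonneg (hα t i k).1 (mul_nonneg (hrate i k) (hx i k))
  have hz_bounds : ∀ t, (∀ i k, 0 ≤ x t.castSucc i k) →
      ∀ i k, 0 ≤ z t i k ∧ z t i k ≤ (v i k / L i) * x t.castSucc i k := fun t hx i k => by
    obtain ⟨hγ0, hγ1, -⟩ := hγmem t i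
    rw [hz]
    exact ⟨mul_nonneg hγ0 (hdemand t hx i k),
      (mul_le_of_le_one_left (hdemand t hx i k) hγ1).trans
        (mul_le_of_le_one_left (mul_nonneg (hrate i k) (hx i k)) (hα t i k).2)⟩
  have hx : ∀ t i k, 0 ≤ x t i k := by
    refine Fin.induction (by simpa [hinit] using hx0) fun t hxt i k => ?_
    have hcfl : h * (v i k / L i) ≤ 1 := by
      rw [← mul_div_assoc, div_le_one (hL i)]; exact (le_div_iff₀ (hv i k)).mp (hCFL i k)
    have hinflow : 0 ≤ ∑ j, f t j i k :=
      sum_nonneg fun j _ => hf t j i k ▸ mul_nonneg (hR ..) (hz_bounds t hxt j k).1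
    rw [hupd]
    exact add_mul_sub_nonneg_of_cfl (hxt i k) hh.le (add_nonneg (hlam t i k) hinflow)
      (hz_bounds t hxt i k).2 hcfl
  have hz_feasible := fun t => hz_bounds t fun i k => hx _ i k
  refine ⟨hx, hz_feasible, fun t i j k => hf t i j k ▸ mul_nonneg (hR ..) (hz_feasible t i k).1,
    hf, fun t i => ?_⟩
  simp only [hf, hz]
  exact sum_fifo_inflow_le _ _ _ _ (hR t) (hdemand t fun i k => hx _ i k) (fun j => hs j _)
    (hγmem t) i

/-- Every trajectory of the controlled discrete-time multi-commodity FIFO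
dynamics (with linear demands `d i k (x) = (v i k / L i) * x`, controls
`α ∈ [0,1]`, FIFO coefficients `γ` given as the supremum in the FIFO rule, and
the mass-conservation update) is a feasible point of the discrete-time relaxed
MC-FNC problem. -/
theorem controlled_fifo_feasible
    (E K : Type*) [Fintype E] [Fintype K] (N : ℕ)
    (v : E → K → ℝ) (hv : ∀ i k, 0 < v i k)
    (L : E → ℝ) (hL : ∀ i, 0 < L i)
    (s : E → ℝ → ℝ) (hs : ∀ i y, 0 ≤ s i y)
    (w : E → K → ℝ) (hw : ∀ i k, 0 < w i k)
    (R : Fin N → E → E → K → ℝ) (hR : ∀ t i j k, 0 ≤ R t i j k)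
    (lam : Fin N → E → K → ℝ) (hlam : ∀ t i k, 0 ≤ lam t i k)
    (α : Fin N → E → K → ℝ) (hα : ∀ t i k, 0 ≤ α t i k ∧ α t i k ≤ 1)
    (h : ℝ) (hh : 0 < h) (hCFL : ∀ i k, h ≤ L i / v i k)
    (x0 : E → K → ℝ) (hx0 : ∀ i k, 0 ≤ x0 i k)
    (x : Fin (N + 1) → E → K → ℝ) (z : Fin N → E → K → ℝ)
    (f : Fin N → E → E → K → ℝ) (γ : Fin N → E → ℝ)
    (hinit : x 0 = x0)
    (hγ : ∀ (t : Fin N) i, γ t i =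
      sSup {g : ℝ | 0 ≤ g ∧ g ≤ 1 ∧ ∀ j, (∃ k, 0 < R t i j k) →
        g * (∑ k, ∑ h', R t h' j k * (α t h' k * ((v h' k / L h') * x t.castSucc h' k)))
          ≤ s j (∑ k, w j k * x t.castSucc j k)})
    (hz : ∀ (t : Fin N) i k,
      z t i k = γ t i * (α t i k * ((v i k / L i) * x t.castSucc i k)))
    (hf : ∀ (t : Fin N) i j k, f t i j k = R t i j k * z t i k)
    (hupd : ∀ (t : Fin N) i k, x t.succ i k = x t.castSucc i k +
      h * (lam t i k + (∑ j, f t j i k) - z t i k)) :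
    (∀ t i k, 0 ≤ x t i k) ∧
    (∀ (t : Fin N) i k,
      0 ≤ z t i k ∧ z t i k ≤ (v i k / L i) * x t.castSucc i k) ∧
    (∀ (t : Fin N) i j k, 0 ≤ f t i j k) ∧
    (∀ (t : Fin N) i j k, f t i j k = R t i j k * z t i k) ∧
    (∀ (t : Fin N) i,
      (∑ k, ∑ j, f t j i k) ≤ s i (∑ k, w i k * x t.castSucc i k)) :=
  controlled_fifo_feasible_general E K N v hv L hL s hs w R hR lam hlam α hα h hh hCFL x0 hx0 x z f
    γ hinit hγ hz hf hupd
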